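/- For m ∈ ℕ and 0 ≤ i ≤ n, one has (R_mG_i)^⋆ = ⟨p^{m−1}(1+σ+⋯+σ^{p^i−1})⟩ = ⟨p^{m−1}(σ−1)^{p^i−1}⟩, and this module is nonzero. -/

import Mathlib

open scoped BigOperators

/-- `U_i = 1 + p^i ℤ` as a subset of `ℤ`. -/
def Uset (p i : ℕ) : Set ℤ := {d : ℤ | ∃ k : ℤ, d = 1 + (p : ℤ) ^ i * k}

/-- `−U_i = {−u : u ∈ U_i}` as a subset of `ℤ`. -/
def negUset (p i : ℕ) : Set ℤ := {d : ℤ | -d ∈ Uset p i}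

/-- The coefficient ring `R_m = ℤ/p^mℤ`. -/
abbrev Rm (p m : ℕ) : Type := ZMod (p ^ m)

/-- The cyclic group of order `p^n`, written multiplicatively. -/
abbrev Cyc (p n : ℕ) : Type := Multiplicative (ZMod (p ^ n))

/-- The group ring `R_m G_n` of the cyclic group of order `p^n` over `ℤ/p^mℤ`. -/
abbrev RG (p m n : ℕ) : Type := MonoidAlgebra (Rm p m) (Cyc p n)

/-- The distinguished generator `σ` of the cyclic group of order `p^n`,
viewed as an element of the group ring `R_m G_n`. -/
noncomputable def sg (p m n : ℕ) : RG p m n :=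
  MonoidAlgebra.of (Rm p m) (Cyc p n) (Multiplicative.ofAdd (1 : ZMod (p ^ n)))

/-- The norm operator `P(i,j) = Σ_{k=0}^{p^{i-j}-1} σ^{k p^j}` in `R_m G_n`. -/
noncomputable def Pel (p m n i j : ℕ) : RG p m n :=
  ∑ k ∈ Finset.range (p ^ (i - j)), sg p m n ^ (k * p ^ j)

/-- The operator `Q_d(i,j) = Σ_{k=0}^{p^{i-j}-1} (d^{p^j})^{p^{i-j}-1-k} (σ^{p^j})^k` in `R_m G_n`. -/
noncomputable def Qel (p m n : ℕ) (d : ℤ) (i j : ℕ) : RG p m n :=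
  ∑ k ∈ Finset.range (p ^ (i - j)),
    ((d : RG p m n) ^ p ^ j) ^ (p ^ (i - j) - 1 - k) * sg p m n ^ (p ^ j * k)

/-- `p^a` for `a ∈ {−∞} ∪ ℕ`, with the convention `p^{−∞} = 0`. -/
def pexp (p : ℕ) (a : WithBot ℕ) : ℕ := WithBot.recBotCoe 0 (fun k => p ^ k) a

/-- `σ^{p^a}` for `a ∈ {−∞} ∪ ℕ`, with the convention `σ^{p^{−∞}} = 0`. -/
noncomputable def sigmaPow (p m n : ℕ) (a : WithBot ℕ) : RG p m n :=
  WithBot.recBotCoe 0 (fun k => sg p m n ^ p ^ k) a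

/-- `P(i,c)` for `c ∈ {−∞} ∪ ℕ`, with the convention `P(i,−∞) = 1`. -/
noncomputable def PelW (p m n i : ℕ) (c : WithBot ℕ) : RG p m n :=
  WithBot.recBotCoe 1 (fun k => Pel p m n i k) c

/-- The submodule of relations defining `X_{a,d,m}`: the free module on generators
`y = e 0` and `x_i = e (i+1)` modulo `(σ-d)y = Σ p^i x_i` and `σ^{p^{a_i}} x_i = x_i`
(where `σ^{p^{−∞}} x_i = 0`). -/
noncomputable def Xrel (p m n : ℕ) (a : ℕ → WithBot ℕ) (d : ℤ) :
    Submodule (RG p m n) (Fin (m + 1) → RG p m n) :=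
  Submodule.span (RG p m n)
    (insert
      ((sg p m n - (d : RG p m n)) •
          (Pi.single (0 : Fin (m + 1)) 1 : Fin (m + 1) → RG p m n) -
        ∑ i : Fin m, ((p : RG p m n) ^ (i : ℕ)) •
          (Pi.single i.succ 1 : Fin (m + 1) → RG p m n))
      (Set.range fun i : Fin m =>
        (sigmaPow p m n (a (i : ℕ)) - 1) •
          (Pi.single i.succ 1 : Fin (m + 1) → RG p m n)))

/-- The `R_m G`-module `X_{a,d,m}`. -/
abbrev Xmod (p m n : ℕ) (a : ℕ → WithBot ℕ) (d : ℤ) : Type :=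
  (Fin (m + 1) → RG p m n) ⧸ Xrel p m n a d

/-- The generator `y` of `X_{a,d,m}`. -/
noncomputable def Xy (p m n : ℕ) (a : ℕ → WithBot ℕ) (d : ℤ) : Xmod p m n a d :=
  Submodule.Quotient.mk (Pi.single (0 : Fin (m + 1)) 1 : Fin (m + 1) → RG p m n)

/-- The generator `x_i` of `X_{a,d,m}`. -/
noncomputable def Xx (p m n : ℕ) (a : ℕ → WithBot ℕ) (d : ℤ) (i : Fin m) : Xmod p m n a d :=
  Submodule.Quotient.mk (Pi.single i.succ 1 : Fin (m + 1) → RG p m n)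

/-- A module is indecomposable if it is nonzero and is not the direct sum of two
nonzero submodules. -/
def IsIndecomposableModule (R M : Type*) [Ring R] [AddCommGroup M] [Module R M] : Prop :=
  Nontrivial M ∧ ∀ V W : Submodule R M, IsCompl V W → V = ⊥ ∨ W = ⊥

/-- Hypotheses (I)–(V) of Theorem 1, together with the requirement
`a ∈ {−∞,0,1,…,n}^m`. -/
def Hyp (p n m : ℕ) (a : ℕ → WithBot ℕ) (d : ℤ) : Prop :=
  (∀ i < m, a i ≤ (n : WithBot ℕ)) ∧
  d ∈ Uset p 1 ∧
  (∀ i < m, d ^ pexp p (a i) ∈ Uset p (i + 1)) ∧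
  (∀ i j : ℕ, i < m → 1 ≤ j → i + j < m → a (i + j) ≠ ⊥ →
    ¬(p = 2 ∧ d ∉ Uset p 2 ∧ i = 0 ∧ a 0 = 0) →
    a i + (j : WithBot ℕ) < a (i + j)) ∧
  (p = 2 → d ∉ Uset p 2 → a 0 = 0 → ∀ j, 1 ≤ j → j < m → a j ≠ 0) ∧
  (p = 2 → n = 1 → a 0 = ⊥) ∧
  (∀ v : ℕ, p = 2 → 2 ≤ m → 2 ≤ v → d ∈ negUset p v → d ∉ negUset p (v + 1) →
    a 0 = 0 → ∀ i, v ≤ i → i < m → ((i - (v - 1) : ℕ) : WithBot ℕ) < a i ∧ a i ≠ ⊥)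

/-- The invariant `l(u)`: the dimension over `F_p` of the `F_p G`-submodule of `M/pM`
generated by the class of `u`; equivalently the least `k` with `(σ-1)^k u ∈ pM`. -/
noncomputable def ell (p m n : ℕ) {M : Type*} [AddCommGroup M] [Module (RG p m n) M]
    (u : M) : ℕ :=
  sInf {k : ℕ | ((sg p m n - 1) ^ k) • u ∈
    (Ideal.span {(p : RG p m n)} • (⊤ : Submodule (RG p m n) M) : Submodule (RG p m n) M)}

/-- `M^⋆ = {u ∈ M : (σ-1)u = 0 and pu = 0}`. -/
def Mstar (p m n : ℕ) (M : Type*) [AddCommGroup M] [Module (RG p m n) M] : Set M :=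
  {u : M | (sg p m n - 1) • u = 0 ∧ (p : RG p m n) • u = 0}
/-- The group ring `ℤG` of the cyclic group of order `p^n`. -/
abbrev ZG (p n : ℕ) : Type := MonoidAlgebra ℤ (Cyc p n)

/-- The generator `σ` as an element of `ℤG`. -/
noncomputable def sgZ (p n : ℕ) : ZG p n :=
  MonoidAlgebra.of ℤ (Cyc p n) (Multiplicative.ofAdd (1 : ZMod (p ^ n)))

/-- The norm operator `P(i,j)` as an element of `ℤG`. -/
noncomputable def PelZ (p n i j : ℕ) : ZG p n :=
  ∑ k ∈ Finset.range (p ^ (i - j)), sgZ p n ^ (k * p ^ j)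

/-- The additive map `φ_d : ℤG → ℤ` induced by `σ^t ↦ d^t` for `0 ≤ t < p^n`. -/
noncomputable def phiZ (p n : ℕ) (d : ℤ) (f : ZG p n) : ℤ :=
  ∑ t ∈ Finset.range (p ^ n), f.coeff (Multiplicative.ofAdd ((t : ℕ) : ZMod (p ^ n))) * d ^ t

/-- The map `φ_d^{(m)} : R_m G_n → R_m` induced by `σ^t ↦ d^t` for `0 ≤ t < p^n`. -/
noncomputable def phiM (p m n : ℕ) (d : ℤ) (f : RG p m n) : Rm p m :=
  ∑ t ∈ Finset.range (p ^ n), f.coeff (Multiplicative.ofAdd ((t : ℕ) : ZMod (p ^ n))) * (d : Rm p m) ^ t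

/-- The natural `R_m`-algebra homomorphism `χ_j : R_m G_i → R_m G_j` for `j ≤ i`. -/
noncomputable def chiMap (p m : ℕ) {i j : ℕ} (h : j ≤ i) : RG p m i →+* RG p m j :=
  MonoidAlgebra.mapDomainRingHom (Rm p m)
    (AddMonoidHom.toMultiplicative
      ((ZMod.castHom (pow_dvd_pow p h) (ZMod (p ^ j))).toAddMonoidHom))

/-- Coefficient reduction `R_m G_n → R_{m-1} G_n`. -/
noncomputable def barMap (p m n : ℕ) (f : RG p m n) : RG p (m - 1) n :=
  MonoidAlgebra.ofCoeff (Finsupp.mapRange (ZMod.castHom (pow_dvd_pow p (Nat.sub_le m 1)) (ZMod (p ^ (m - 1))))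
    (map_zero _) f.coeff)

/-- `W/p^{m-1}W` is a free `R_{m-1}G_k`-module: there is an additive isomorphism with
a finite power of `R_{m-1}G_k` intertwining the actions of `σ` (and hence of the
coefficients, which act through the additive group structure). -/
def QuotFree (p m n k : ℕ) {M : Type*} [AddCommGroup M] [Module (RG p m n) M]
    (W : Submodule (RG p m n) M) : Prop :=
  ∃ (r : ℕ) (e : (W ⧸ (Ideal.span {(p : RG p m n) ^ (m - 1)} •
      (⊤ : Submodule (RG p m n) W))) ≃+ (Fin r → RG p (m - 1) k)),
    ∀ q, e (sg p m n • q) = fun s => sg p (m - 1) k * e q s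

/-! An element `u` of `R_m G_i` with `σ u = u` has constant coefficients, so `u = c N` for the norm
element `N = 1 + σ + ⋯ + σ^{p^i-1}`, and `p u = 0` forces `c ∈ p^{m-1} R_m`. In characteristic `p`,
`(X - 1)^{p^i} = X^{p^i} - 1` lets one cancel `X - 1` in `𝔽_p[X]`, giving `(σ - 1)^{p^i-1} ≡ N`
modulo `p`; as `p^m = 0`, multiplying by `p^{m-1}` turns this congruence into an equality.
Finally `p^{m-1} N` has coefficient `p^{m-1} ≠ 0` at `1`. -/
namespace MonoidAlgebra

variable {k G : Type*} [Semiring k] [Group G]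

theorem coeff_mul_eq_of_of_mul_eq {g : G} {x : k[G]} (hx : of k G g * x = x) (a : G) :
    x.coeff (g * a) = x.coeff a := by
  conv_lhs => rw [← hx]
  simp [of_apply, coeff_single_mul_apply]

theorem coeff_eq_coeff_one_of_of_mul_eq {g : G} (hg : ∀ a : G, a ∈ Submonoid.powers g)
    {x : k[G]} (hx : of k G g * x = x) (a : G) : x.coeff a = x.coeff 1 := by
  obtain ⟨n, rfl⟩ := hg a
  beta_reduce
  induction n with
  | zero => rw [pow_zero]
  | succ n ih => rw [pow_succ', coeff_mul_eq_of_of_mul_eq hx, ih]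

theorem coeff_sum_of [Fintype G] (a : G) : (∑ b : G, of k G b).coeff a = 1 := by
  classical
  simp [coeff_sum, of_apply, coeff_single, Finsupp.single_apply]

theorem eq_single_one_mul_sum_of [Fintype G] {x : k[G]} (hx : ∀ a, x.coeff a = x.coeff 1) :
    x = single 1 (x.coeff 1) * ∑ b : G, of k G b := by
  ext a
  rw [coeff_single_one_mul, coeff_sum_of, mul_one, hx]

end MonoidAlgebra

theorem ZMod.exists_eq_pow_pred_mul_of_mul_eq_zero {p m : ℕ} (hp : p ≠ 0) {c : ZMod (p ^ m)}
    (hc : (p : ZMod (p ^ m)) * c = 0) :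
    ∃ y : ZMod (p ^ m), c = (p : ZMod (p ^ m)) ^ (m - 1) * y := by
  rcases m with _ | m
  · exact ⟨c, by simp only [zero_tsub, pow_zero, one_mul]⟩
  have : NeZero (p ^ (m + 1)) := ⟨pow_ne_zero _ hp⟩
  have : p * p ^ m ∣ p * c.val := by
    rw [← pow_succ', ← ZMod.natCast_eq_zero_iff, Nat.cast_mul, ZMod.natCast_zmod_val]
    exact hc
  obtain ⟨y, hy⟩ := Nat.dvd_of_mul_dvd_mul_left (Nat.pos_of_ne_zero hp) this
  refine ⟨y, ?_⟩
  rw [Nat.add_sub_cancel, ← ZMod.natCast_zmod_val c, hy]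
  push_cast
  rfl

theorem ZMod.mem_powers_ofAdd_one {n : ℕ} [NeZero n] (a : Multiplicative (ZMod n)) :
    a ∈ Submonoid.powers (Multiplicative.ofAdd 1) :=
  ⟨a.toAdd.val, by
    dsimp only
    rw [← ofAdd_nsmul, nsmul_one, ZMod.natCast_zmod_val, ofAdd_toAdd]⟩

theorem ZMod.natCast_pow_pred_ne_zero {p m : ℕ} (hp : 1 < p) (hm : m ≠ 0) :
    (p : ZMod (p ^ m)) ^ (m - 1) ≠ 0 := by
  rw [← Nat.cast_pow, Ne, ZMod.natCast_eq_zero_iff]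
  exact Nat.not_dvd_of_pos_of_lt (by positivity) (Nat.pow_lt_pow_right hp (by omega))

theorem sub_one_pow_pred_eq_geom_sum {B : Type*} [CommRing B] (p : ℕ) [Fact p.Prime] [CharP B p]
    (b : B) (i : ℕ) : (b - 1) ^ (p ^ i - 1) = ∑ k ∈ Finset.range (p ^ i), b ^ k := by
  open Polynomial in
  have hX : (X - 1 : (ZMod p)[X]) ^ (p ^ i - 1) = ∑ k ∈ Finset.range (p ^ i), X ^ k := by
    apply mul_right_cancel₀ (by simpa using X_sub_C_ne_zero (1 : ZMod p))
    rw [← pow_succ, Nat.sub_add_cancel (Nat.one_le_pow _ _ (Fact.out : p.Prime).pos),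
      geom_sum_mul, sub_pow_char_pow, one_pow]
  simpa only [map_pow, map_sub, map_one, map_sum, Polynomial.coe_eval₂RingHom,
    Polynomial.eval₂_X] using
    congrArg (Polynomial.eval₂RingHom (ZMod.castHom dvd_rfl B) b) hX

theorem pow_pred_mul_eq_of_sub_mem_span {A : Type*} [CommRing A] {p a b : A} {m : ℕ}
    (hm : m ≠ 0) (hp : p ^ m = 0) (hab : a - b ∈ Ideal.span {p}) :
    p ^ (m - 1) * a = p ^ (m - 1) * b := by
  obtain ⟨y, hy⟩ := Ideal.mem_span_singleton'.mp hab
  rw [← sub_eq_zero, ← mul_sub, ← hy, mul_comm y, ← mul_assoc, ← pow_succ,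
    Nat.sub_add_cancel (by omega), hp, zero_mul]

open MonoidAlgebra

section GroupRing

variable {p m i : ℕ}

theorem sg_pow (k : ℕ) :
    sg p m i ^ k = of (Rm p m) (Cyc p i) (Multiplicative.ofAdd (k : ZMod (p ^ i))) := by
  rw [sg, ← map_pow, ← ofAdd_nsmul, nsmul_one]

theorem sg_pow_card : sg p m i ^ p ^ i = 1 := by
  rw [sg_pow, ZMod.natCast_self, ofAdd_zero, map_one]

theorem Pel_self_zero_eq_sum_of [NeZero p] :
    Pel p m i i 0 = ∑ a : Cyc p i, of (Rm p m) (Cyc p i) a := by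
  simp only [Pel, tsub_zero, pow_zero, mul_one, sg_pow]
  refine Finset.sum_nbij' (fun k => Multiplicative.ofAdd (k : ZMod (p ^ i)))
    (fun a => a.toAdd.val) ?_ ?_ ?_ ?_ ?_ <;> intros
  all_goals simp_all [ZMod.val_lt, Nat.mod_eq_of_lt]

theorem sg_sub_one_mul_Pel_self_zero : (sg p m i - 1) * Pel p m i i 0 = 0 := by
  simp only [Pel, tsub_zero, pow_zero, mul_one]
  rw [mul_comm, geom_sum_mul, sg_pow_card, sub_self]

theorem natCast_pow_self_eq_zero : (p : RG p m i) ^ m = 0 := by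
  rw [← Nat.cast_pow, natCast_def, ZMod.natCast_self, single_zero]

theorem coeff_natCast_mul (k : ℕ) (x : RG p m i) (a : Cyc p i) :
    ((k : RG p m i) * x).coeff a = k * x.coeff a := by
  rw [natCast_def, coeff_single_one_mul]

theorem Mstar_RG_eq_span (hp : p.Prime) (hm : m ≠ 0) :
    Mstar p m i (RG p m i) = ↑(Ideal.span {(p : RG p m i) ^ (m - 1) * Pel p m i i 0}) := by
  have : NeZero p := ⟨hp.ne_zero⟩
  ext u
  simp only [Mstar, Set.mem_ofPred_eq, SetLike.mem_coe, smul_eq_mul, Ideal.mem_span_singleton']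
  constructor
  · rintro ⟨hσ, hpu⟩
    have hfix : of (Rm p m) (Cyc p i) (Multiplicative.ofAdd 1) * u = u := by
      rw [← sub_eq_zero, ← sub_one_mul]
      exact hσ
    have hconst : u = single 1 (u.coeff 1) * Pel p m i i 0 := by
      rw [Pel_self_zero_eq_sum_of]
      have := coeff_eq_coeff_one_of_of_mul_eq (ZMod.mem_powers_ofAdd_one (n := p ^ i)) hfix
      exact eq_single_one_mul_sum_of this
    obtain ⟨y, hy⟩ := ZMod.exists_eq_pow_pred_mul_of_mul_eq_zero hp.ne_zero (c := u.coeff 1)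
      (by rw [← coeff_natCast_mul, hpu, coeff_zero, Finsupp.coe_zero, Pi.zero_apply])
    refine ⟨single 1 y, ?_⟩
    conv_rhs => rw [hconst, hy]
    rw [← Nat.cast_pow, natCast_def, ← mul_assoc, single_mul_single, one_mul, mul_comm y,
      Nat.cast_pow]
  · rintro ⟨v, rfl⟩
    constructor
    · rw [mul_left_comm, mul_left_comm _ (_ ^ _), sg_sub_one_mul_Pel_self_zero, mul_zero, mul_zero]
    · calc (p : RG p m i) * (v * (p ^ (m - 1) * Pel p m i i 0))
          = v * Pel p m i i 0 * p ^ (m - 1 + 1) := by ring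
        _ = 0 := by rw [Nat.sub_add_cancel (by omega), natCast_pow_self_eq_zero, mul_zero]

theorem natCast_pow_pred_mul_sub_one_pow (hp : p.Prime) (hm : m ≠ 0) :
    (p : RG p m i) ^ (m - 1) * (sg p m i - 1) ^ (p ^ i - 1) =
      (p : RG p m i) ^ (m - 1) * Pel p m i i 0 := by
  have : Fact p.Prime := ⟨hp⟩
  have : Fact (1 < p ^ m) := ⟨Nat.one_lt_pow hm hp.one_lt⟩
  have : CharP (RG p m i ⧸ Ideal.span {(p : RG p m i)}) p :=
    CharP.quotient _ p (IsNilpotent.not_isUnit ⟨m, natCast_pow_self_eq_zero⟩)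
  refine pow_pred_mul_eq_of_sub_mem_span hm natCast_pow_self_eq_zero ?_
  rw [← Ideal.Quotient.eq]
  simp only [Pel, tsub_zero, pow_zero, mul_one, map_pow, map_sub, map_one, map_sum]
  exact sub_one_pow_pred_eq_geom_sum p _ i

theorem natCast_pow_pred_mul_Pel_self_zero_ne_zero (hp : p.Prime) (hm : m ≠ 0) :
    (p : RG p m i) ^ (m - 1) * Pel p m i i 0 ≠ 0 := by
  have : NeZero p := ⟨hp.ne_zero⟩
  intro h
  apply ZMod.natCast_pow_pred_ne_zero hp.one_lt hm
  have h1 := congrArg (·.coeff (1 : Cyc p i)) h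
  rw [← Nat.cast_pow, coeff_natCast_mul, Pel_self_zero_eq_sum_of, coeff_sum_of, mul_one] at h1
  exact_mod_cast h1

end GroupRing

theorem star_of_RmGi_general (p m : ℕ) (hp : p.Prime) (hm : 1 ≤ m) (i : ℕ) :
    Mstar p m i (RG p m i) =
      ↑(Ideal.span {(p : RG p m i) ^ (m - 1) * Pel p m i i 0}) ∧
    Mstar p m i (RG p m i) =
      ↑(Ideal.span {(p : RG p m i) ^ (m - 1) * (sg p m i - 1) ^ (p ^ i - 1)}) ∧
    (Ideal.span {(p : RG p m i) ^ (m - 1) * Pel p m i i 0} : Ideal (RG p m i)) ≠ ⊥ := by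
  have hm0 : m ≠ 0 := Nat.one_le_iff_ne_zero.mp hm
  have hstar := Mstar_RG_eq_span (i := i) hp hm0
  refine ⟨hstar, ?_, ?_⟩
  · rw [natCast_pow_pred_mul_sub_one_pow hp hm0]
    exact hstar
  · exact Ideal.span_singleton_eq_bot.not.mpr (natCast_pow_pred_mul_Pel_self_zero_ne_zero hp hm0)

/-- Lemma 3.4 (`le:starrmgi`). -/
theorem star_of_RmGi (p n m : ℕ) (hp : p.Prime) (hm : 1 ≤ m) (i : ℕ) (hin : i ≤ n) :
    Mstar p m i (RG p m i) =
      ↑(Ideal.span {(p : RG p m i) ^ (m - 1) * Pel p m i i 0}) ∧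
    Mstar p m i (RG p m i) =
      ↑(Ideal.span {(p : RG p m i) ^ (m - 1) * (sg p m i - 1) ^ (p ^ i - 1)}) ∧
    (Ideal.span {(p : RG p m i) ^ (m - 1) * Pel p m i i 0} : Ideal (RG p m i)) ≠ ⊥ :=
  star_of_RmGi_general p m hp hm i
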